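/- Let u₁, v₁, u₂, v₂, …, u_{k−1}, v_{k−1} ≥ 2 and u_k ≥ 1 be integers. Then every integer m with 0 ≤ m < U_k V_{k−1} can be written uniquely in the form m = s + t with s ∈ S(u₁, v₁, …, u_{k−1}, v_{k−1}, u_k) and t ∈ T(u₁, v₁, …, u_{k−1}, v_{k−1}). -/
import Mathlib


/-- `Uprod u i = u 0 * u 1 * ⋯ * u (i-1)`, i.e. `U_i = u₁u₂⋯u_i` for the
0-indexed sequence `u`. -/
def Uprod (u : ℕ → ℕ) (i : ℕ) : ℕ := ∏ j ∈ Finset.range i, u j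

/-- `S(u₁, v₁, …, u_{k−1}, v_{k−1}, u_k) =
{i₀ + i₁U₁V₁ + ⋯ + i_{k−1}U_{k−1}V_{k−1} : 0 ≤ i_h < u_{h+1}}` (0-indexed). -/
def Sset (u v : ℕ → ℕ) (k : ℕ) : Set ℕ :=
  {s | ∃ i : ℕ → ℕ, (∀ h < k, i h < u h) ∧
    s = ∑ h ∈ Finset.range k, i h * (Uprod u h * Uprod v h)}

/-- `T(u₁, v₁, …, u_k, v_k) =
{j₀U₁ + j₁U₂V₁ + ⋯ + j_{k−1}U_kV_{k−1} : 0 ≤ j_h < v_{h+1}}` (0-indexed). -/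
def Tset (u v : ℕ → ℕ) (k : ℕ) : Set ℕ :=
  {t | ∃ j : ℕ → ℕ, (∀ h < k, j h < v h) ∧
    t = ∑ h ∈ Finset.range k, j h * (Uprod u (h + 1) * Uprod v h)}

/-- `T(u₁, v₁, …, u_k, ∞)`: as `Tset` but with the last digit `j_{k-1}`
unbounded. -/
def TsetInf (u v : ℕ → ℕ) (k : ℕ) : Set ℕ :=
  {t | ∃ j : ℕ → ℕ, (∀ h, h + 1 < k → j h < v h) ∧
    t = ∑ h ∈ Finset.range k, j h * (Uprod u (h + 1) * Uprod v h)}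

/-- `A_λ(T) = {Σ_{t ∈ T} δ_t λ^t : 0 ≤ δ_t < λ, all but finitely many δ_t = 0}`. -/
def Aset (lam : ℕ) (T : Set ℕ) : Set ℕ :=
  {a | ∃ δ : ℕ →₀ ℕ, (∀ t, δ t < lam) ∧ (∀ t, δ t ≠ 0 → t ∈ T) ∧
    a = δ.sum fun t d => d * lam ^ t}

/-- `R_{A,λ̄}(n) = |{(a₁,…,a_m) ∈ A^m : λ₁a₁ + ⋯ + λ_m a_m = n}|`. -/
noncomputable def R {m : ℕ} (A : Set ℕ) (lam : Fin m → ℕ) (n : ℕ) : ℕ :=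
  Set.ncard {a : Fin m → ℕ | (∀ i, a i ∈ A) ∧ ∑ i, lam i * a i = n}

lemma Uprod_zero (u : ℕ → ℕ) : Uprod u 0 = 1 := Finset.prod_range_zero u

lemma Uprod_succ (u : ℕ → ℕ) (k : ℕ) : Uprod u (k+1) = Uprod u k * u k :=
  Finset.prod_range_succ u k

lemma Sset_succ (u v : ℕ → ℕ) (k : ℕ) (s : ℕ) :
    s ∈ Sset u v (k+1) ↔
      ∃ s' ∈ Sset u v k, ∃ c < u k, s = s' + c * (Uprod u k * Uprod v k) := by
  constructor
  · rintro ⟨i, hi, rfl⟩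
    refine ⟨∑ h ∈ Finset.range k, i h * (Uprod u h * Uprod v h),
      ⟨i, fun h hh => hi h (hh.trans (Nat.lt_succ_self k)), rfl⟩,
      i k, hi k (Nat.lt_succ_self k), Finset.sum_range_succ _ k⟩
  · rintro ⟨s', ⟨i, hi, rfl⟩, c, hc, rfl⟩
    refine ⟨fun h => if h = k then c else i h, ?_, ?_⟩
    · intro h hh
      rcases Nat.lt_succ_iff_lt_or_eq.mp hh with h1 | rfl
      · simpa [Nat.ne_of_lt h1] using hi h h1
      · simpa using hc
    · rw [Finset.sum_range_succ]
      simp only [if_pos rfl]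
      congr 1
      refine Finset.sum_congr rfl fun h hh => ?_
      rw [if_neg (Nat.ne_of_lt (Finset.mem_range.mp hh))]

lemma Tset_succ (u v : ℕ → ℕ) (k : ℕ) (t : ℕ) :
    t ∈ Tset u v (k+1) ↔
      ∃ t' ∈ Tset u v k, ∃ c < v k, t = t' + c * (Uprod u (k+1) * Uprod v k) := by
  constructor
  · rintro ⟨j, hj, rfl⟩
    refine ⟨∑ h ∈ Finset.range k, j h * (Uprod u (h+1) * Uprod v h),
      ⟨j, fun h hh => hj h (hh.trans (Nat.lt_succ_self k)), rfl⟩,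
      j k, hj k (Nat.lt_succ_self k), Finset.sum_range_succ _ k⟩
  · rintro ⟨t', ⟨j, hj, rfl⟩, c, hc, rfl⟩
    refine ⟨fun h => if h = k then c else j h, ?_, ?_⟩
    · intro h hh
      rcases Nat.lt_succ_iff_lt_or_eq.mp hh with h1 | rfl
      · simpa [Nat.ne_of_lt h1] using hj h h1
      · simpa using hc
    · rw [Finset.sum_range_succ]
      simp only [if_pos rfl]
      congr 1
      refine Finset.sum_congr rfl fun h hh => ?_
      rw [if_neg (Nat.ne_of_lt (Finset.mem_range.mp hh))]

lemma Tset_zero (u v : ℕ → ℕ) (t : ℕ) : t ∈ Tset u v 0 ↔ t = 0 := by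
  constructor
  · rintro ⟨j, -, rfl⟩; simp
  · rintro rfl; exact ⟨fun _ => 0, by simp, by simp⟩

lemma Sset_one (u v : ℕ → ℕ) (s : ℕ) : s ∈ Sset u v 1 ↔ s < u 0 := by
  constructor
  · rintro ⟨i, hi, rfl⟩
    simpa [Uprod_zero] using hi 0 Nat.one_pos
  · intro hs
    exact ⟨fun _ => s, fun h hh => by interval_cases h; exact hs, by simp [Uprod_zero]⟩

lemma bound_lem (u v : ℕ → ℕ) : ∀ n, (∀ h, h < n + 1 → 1 ≤ u h) → (∀ h, h < n → 1 ≤ v h) →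
    ∀ s ∈ Sset u v (n+1), ∀ t ∈ Tset u v n, s + t < Uprod u (n+1) * Uprod v n := by
  intro n
  induction n with
  | zero =>
    intro hu hv s hs t ht
    rw [Tset_zero] at ht
    rw [Sset_one] at hs
    subst ht
    simpa [Uprod_succ, Uprod_zero] using hs
  | succ n ih =>
    intro hu hv s hs t ht
    rcases (Sset_succ u v (n+1) s).mp hs with ⟨s', hs', c, hc, rfl⟩
    rcases (Tset_succ u v n t).mp ht with ⟨t', ht', d, hd, rfl⟩
    have hb := ih (fun h hh => hu h (hh.trans (Nat.lt_succ_self _)))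
      (fun h hh => hv h (hh.trans (Nat.lt_succ_self _))) s' hs' t' ht'
    have hc' : c + 1 ≤ u (n+1) := hc
    have hd' : d + 1 ≤ v n := hd
    have e1 : Uprod u (n+2) * Uprod v (n+1)
        = (Uprod u (n+1) * Uprod v n) * (u (n+1) * v n) := by
      rw [Uprod_succ u (n+1), Uprod_succ v n]; ring
    have e2 : Uprod u (n+1) * Uprod v (n+1) = (Uprod u (n+1) * Uprod v n) * v n := by
      rw [Uprod_succ v n]; ring
    rw [e1, e2]
    set D := Uprod u (n+1) * Uprod v n with hD
    nlinarith [hb, mul_le_mul_left hc' (v n * D), mul_le_mul_left hd' D]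

lemma div_mod_uniq {D q r m : ℕ} (hr : r < D) (h : m = q * D + r) :
    q = m / D ∧ r = m % D := by
  have h0 : 0 < D := lt_of_le_of_lt (Nat.zero_le r) hr
  have heq : r + D * q = m := by rw [h]; ring
  have := (Nat.div_mod_unique h0).mpr ⟨heq, hr⟩
  exact ⟨this.1.symm, this.2.symm⟩

lemma main_lem (u v : ℕ → ℕ) : ∀ n, (∀ h, h < n → 2 ≤ u h) → (∀ h, h < n → 2 ≤ v h) →
    1 ≤ u n → ∀ m, m < Uprod u (n+1) * Uprod v n →
    ∃! p : ℕ × ℕ, p.1 ∈ Sset u v (n+1) ∧ p.2 ∈ Tset u v n ∧ m = p.1 + p.2 := by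
  intro n
  induction n with
  | zero =>
    intro hu hv huk m hm
    simp only [Uprod_succ, Uprod_zero, one_mul, mul_one] at hm
    refine ⟨(m, 0), ⟨(Sset_one u v m).mpr hm, (Tset_zero u v 0).mpr rfl, rfl⟩, ?_⟩
    rintro ⟨s, t⟩ ⟨hs, ht, rfl⟩
    rw [Tset_zero] at ht
    simp only [Prod.mk.injEq]
    omega
  | succ n ih =>
    intro hu hv huk m hm
    have hu1 : ∀ h, h < n + 1 → 1 ≤ u h := fun h hh => le_trans one_le_two (hu h hh)
    have hv1 : ∀ h, h < n → 1 ≤ v h := fun h hh =>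
      le_trans one_le_two (hv h (hh.trans (Nat.lt_succ_self n)))
    have hD : 0 < Uprod u (n+1) * Uprod v n := by
      apply Nat.mul_pos <;> exact Finset.prod_pos fun h hh => by
        first
        | exact hu1 h (Finset.mem_range.mp hh)
        | exact hv1 h (Finset.mem_range.mp hh)
    set D := Uprod u (n+1) * Uprod v n with hDdef
    have hvn : 0 < v n := lt_of_lt_of_le Nat.zero_lt_two (hv n (Nat.lt_succ_self n))
    have e1 : Uprod u (n+2) * Uprod v (n+1) = D * (u (n+1) * v n) := by
      rw [hDdef, Uprod_succ u (n+1), Uprod_succ v n]; ring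
    have e2 : Uprod u (n+1) * Uprod v (n+1) = D * v n := by
      rw [hDdef, Uprod_succ v n]; ring
    have hr : m % D < D := Nat.mod_lt m hD
    have hj : (m / D) % v n < v n := Nat.mod_lt _ hvn
    have hi : (m / D) / v n < u (n+1) := by
      rw [Nat.div_lt_iff_lt_mul hvn, Nat.div_lt_iff_lt_mul hD]
      rw [e1] at hm; linarith [hm]
    obtain ⟨⟨s', t'⟩, ⟨hs', ht', hrst⟩, huniq⟩ :=
      ih (fun h hh => hu h (hh.trans (Nat.lt_succ_self _)))
        (fun h hh => hv h (hh.trans (Nat.lt_succ_self _)))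
        (le_trans one_le_two (hu n (Nat.lt_succ_self _))) (m % D) hr
    simp only at hs' ht' hrst
    refine ⟨(s' + (m / D / v n) * (Uprod u (n+1) * Uprod v (n+1)), t' + (m / D % v n) * D),
      ⟨?_, ?_, ?_⟩, ?_⟩
    · exact (Sset_succ u v (n+1) _).mpr ⟨s', hs', _, hi, rfl⟩
    · exact (Tset_succ u v n _).mpr ⟨t', ht', _, hj, rfl⟩
    · have h1 : m = D * (m / D) + m % D := (Nat.div_add_mod m D).symm
      have h2 : m / D = v n * (m / D / v n) + m / D % v n := (Nat.div_add_mod (m / D) (v n)).symm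
      simp only
      rw [e2]
      conv_lhs => rw [h1, h2, hrst]
      ring
    · rintro ⟨s, t⟩ ⟨hs, ht, hmeq⟩
      simp only at hs ht hmeq ⊢
      rcases (Sset_succ u v (n+1) s).mp hs with ⟨s₁, hs₁, c, hc, rfl⟩
      rcases (Tset_succ u v n t).mp ht with ⟨t₁, ht₁, d, hd, rfl⟩
      have hbd : s₁ + t₁ < D := bound_lem u v n hu1 hv1 s₁ hs₁ t₁ ht₁
      have heq : m = (c * v n + d) * D + (s₁ + t₁) := by
        rw [hmeq, e2]; ring
      obtain ⟨hq, hrr⟩ := div_mod_uniq hbd heq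
      obtain ⟨hc2, hd2⟩ := div_mod_uniq hd hq.symm
      have hst : (s₁, t₁) = (s', t') := huniq (s₁, t₁) ⟨hs₁, ht₁, hrr.symm⟩
      have hs1 : s₁ = s' := congrArg Prod.fst hst
      have ht1 : t₁ = t' := congrArg Prod.snd hst
      rw [hs1, ht1, hc2, hd2]

theorem stmt8 (k : ℕ) (hk : 1 ≤ k) (u v : ℕ → ℕ)
    (hu : ∀ h, h + 1 < k → 2 ≤ u h) (hv : ∀ h, h + 1 < k → 2 ≤ v h)
    (huk : 1 ≤ u (k - 1)) :
    ∀ m : ℕ, m < Uprod u k * Uprod v (k - 1) →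
      ∃! p : ℕ × ℕ, p.1 ∈ Sset u v k ∧ p.2 ∈ Tset u v (k - 1) ∧ m = p.1 + p.2 := by
  obtain ⟨n, rfl⟩ : ∃ n, k = n + 1 := ⟨k - 1, (Nat.succ_pred_eq_of_pos hk).symm⟩
  simp only [Nat.add_sub_cancel] at *
  exact main_lem u v n (fun h hh => hu h (by omega)) (fun h hh => hv h (by omega)) huk
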